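/- For every integer m ≥ 1, if α < β are positive rationals with |α| ≤ m and |β| ≤ m, and there is no positive rational γ with |γ| ≤ m and α < γ < β, then α and β are related. -/
import Mathlib


namespace ResolutionGraph

/-- The value of the continued fraction `[a₁, …, aₙ] = a₁ + 1/[a₂, …, aₙ]`. -/
def cfVal : List ℕ → ℚ
  | [] => 0
  | [a] => (a : ℚ)
  | a :: b :: rest => (a : ℚ) + 1 / cfVal (b :: rest)

/-- `L = (a₁, …, aₙ)` is a continued fraction expansion of `q`:
`n ≥ 1`, `a₁ ≥ 0`, `a₂, …, aₙ ≥ 1` and `[a₁, …, aₙ] = q`. -/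
def IsExpansion (L : List ℕ) (q : ℚ) : Prop :=
  L ≠ [] ∧ (∀ x ∈ L.tail, 1 ≤ x) ∧ cfVal L = q

/-- `q` has length `m`, i.e. some expansion `(a₁, …, aₙ)` of `q` satisfies `a₁ + ⋯ + aₙ = m`. -/
def HasLen (q : ℚ) (m : ℕ) : Prop :=
  ∃ L : List ℕ, IsExpansion L q ∧ L.sum = m

/-- `α ∼ β` : one of them has an expansion `[a₁, …, a_k]` and the other equals
`[a₁, …, a_k, n]` for some integer `n ≥ 1`. -/
def Related (α β : ℚ) : Prop :=
  (∃ (L : List ℕ) (n : ℕ), 1 ≤ n ∧ IsExpansion L α ∧ cfVal (L ++ [n]) = β) ∨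
  (∃ (L : List ℕ) (n : ℕ), 1 ≤ n ∧ IsExpansion L β ∧ cfVal (L ++ [n]) = α)

/-- `γ` is the value of the convolution `α ∗ β`, computed from a witness of `α ∼ β`:
for an expansion `[a₁, …, a_k]` of one of them with the other equal to `[a₁, …, a_k, n]`
(`n ≥ 1` an integer), `γ = [a₁, …, a_k, n + 1]`. -/
def ConvWitness (α β γ : ℚ) : Prop :=
  ∃ (L : List ℕ) (n : ℕ), 1 ≤ n ∧
    ((IsExpansion L α ∧ cfVal (L ++ [n]) = β) ∨ (IsExpansion L β ∧ cfVal (L ++ [n]) = α)) ∧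
    cfVal (L ++ [n + 1]) = γ

/-- `α ≺ β` : `β` has an expansion `[a₁, …, a_k]` and `α = [a₁, …, a_ℓ, b]` for some
`0 ≤ ℓ ≤ k − 1` and `1 ≤ b ≤ a_{ℓ+1}`. -/
def Precedes (α β : ℚ) : Prop :=
  ∃ L : List ℕ, IsExpansion L β ∧ ∃ ℓ : ℕ, ∃ h : ℓ < L.length, ∃ b : ℕ,
    1 ≤ b ∧ b ≤ L.get ⟨ℓ, h⟩ ∧ cfVal (L.take ℓ ++ [b]) = α

/-- `α` immediately precedes `β` : `α ≺ β` and `|β| = |α| + 1`. -/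
def ImmediatelyPrecedes (α β : ℚ) : Prop :=
  Precedes α β ∧ ∃ a : ℕ, HasLen α a ∧ HasLen β (a + 1)

lemma cfVal_cons (a : ℕ) {M : List ℕ} (hM : M ≠ []) :
    cfVal (a :: M) = a + 1 / cfVal M := by
  cases M with
  | nil => exact absurd rfl hM
  | cons b r => rfl

lemma one_le_cfVal : ∀ {M : List ℕ}, M ≠ [] → (∀ x ∈ M, 1 ≤ x) → 1 ≤ cfVal M
  | [], h, _ => absurd rfl h
  | [a], _, h => by
      have : (1:ℚ) ≤ a := by exact_mod_cast h a (by simp)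
      simpa [cfVal] using this
  | a :: b :: r, _, h => by
      have h1 : 1 ≤ cfVal (b :: r) :=
        one_le_cfVal (by simp) (fun x hx => h x (by simp [hx]))
      have ha : (1:ℚ) ≤ a := by exact_mod_cast h a (by simp)
      have h0 : 0 < cfVal (b :: r) := lt_of_lt_of_le one_pos h1
      have : cfVal (a :: b :: r) = a + 1 / cfVal (b :: r) := rfl
      rw [this]
      have : 0 ≤ 1 / cfVal (b :: r) := by positivity
      linarith

lemma one_le_sum {M : List ℕ} (hM : M ≠ []) (h : ∀ x ∈ M, 1 ≤ x) : 1 ≤ M.sum := by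
  cases M with
  | nil => exact absurd rfl hM
  | cons a r =>
      have := h a (by simp)
      simp [List.sum_cons]; omega

lemma exp_bounds {a : ℕ} {M : List ℕ} {q : ℚ}
    (h : IsExpansion (a :: M) q) :
    (M = [] ∧ q = a) ∨ (M ≠ [] ∧ (a:ℚ) < q ∧ q ≤ a + 1) := by
  obtain ⟨-, htail, hval⟩ := h
  cases M with
  | nil => exact Or.inl ⟨rfl, by simpa [cfVal] using hval.symm⟩
  | cons b r =>
      have h1 : 1 ≤ cfVal (b :: r) :=
        one_le_cfVal (by simp) (fun x hx => htail x (by simpa using hx))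
      have h0 : 0 < cfVal (b :: r) := lt_of_lt_of_le one_pos h1
      have hv : q = a + 1 / cfVal (b :: r) := by rw [← hval]; rfl
      have h2 : 0 < 1 / cfVal (b :: r) := by positivity
      have h3 : 1 / cfVal (b :: r) ≤ 1 := by rw [div_le_one h0]; exact h1
      exact Or.inr ⟨by simp, by linarith, by linarith⟩

lemma cfVal_succ_head (a : ℕ) (M : List ℕ) :
    cfVal ((a + 1) :: M) = cfVal (a :: M) + 1 := by
  cases M with
  | nil => simp [cfVal]
  | cons b r =>
      have h1 : cfVal ((a+1) :: b :: r) = ((a+1:ℕ):ℚ) + 1 / cfVal (b :: r) := rfl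
      have h2 : cfVal (a :: b :: r) = (a:ℚ) + 1 / cfVal (b :: r) := rfl
      rw [h1, h2]; push_cast; ring


lemma exp_shift {L : List ℕ} {x : ℚ} (h : IsExpansion L x) :
    ∃ L' : List ℕ, IsExpansion L' (x + 1) ∧ L'.sum = L.sum + 1 ∧
      ∀ n : ℕ, cfVal (L' ++ [n]) = cfVal (L ++ [n]) + 1 := by
  obtain ⟨hne, htail, hval⟩ := h
  cases L with
  | nil => exact absurd rfl hne
  | cons a M =>
      refine ⟨(a+1) :: M, ⟨by simp, htail, ?_⟩, by simp [List.sum_cons]; ring, ?_⟩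
      · rw [cfVal_succ_head, hval]
      · intro n
        show cfVal ((a+1) :: (M ++ [n])) = cfVal (a :: (M ++ [n])) + 1
        exact cfVal_succ_head a (M ++ [n])

lemma hasLen_shift {x : ℚ} {a : ℕ} (h : HasLen x a) : HasLen (x + 1) (a + 1) := by
  obtain ⟨L, hL, hs⟩ := h
  obtain ⟨L', hL', hs', -⟩ := exp_shift hL
  exact ⟨L', hL', by rw [hs', hs]⟩

lemma head_pos_of_one_lt {a : ℕ} {M : List ℕ} {q : ℚ}
    (h : IsExpansion (a :: M) q) (hq : 1 < q) : 1 ≤ a := by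
  rcases exp_bounds h with ⟨-, h2⟩ | ⟨-, -, h2⟩
  · by_contra hc
    have : a = 0 := by omega
    rw [this] at h2; simp at h2; rw [h2] at hq; norm_num at hq
  · by_contra hc
    have : a = 0 := by omega
    rw [this] at h2; simp at h2; linarith

lemma hasLen_unshift {x : ℚ} {a : ℕ} (hx : 1 < x) (h : HasLen x a) :
    HasLen (x - 1) (a - 1) := by
  obtain ⟨L, hL, hs⟩ := h
  cases L with
  | nil => exact absurd rfl hL.1
  | cons c M =>
      have hc : 1 ≤ c := head_pos_of_one_lt hL hx
      obtain ⟨d, rfl⟩ : ∃ d, c = d + 1 := ⟨c - 1, by omega⟩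
      refine ⟨d :: M, ⟨by simp, hL.2.1, ?_⟩, ?_⟩
      · have := cfVal_succ_head d M
        have hv := hL.2.2
        rw [this] at hv; linarith
      · simp [List.sum_cons] at hs ⊢; omega

lemma exp_inv {L : List ℕ} {x : ℚ} (hx : 0 < x) (h : IsExpansion L x) :
    ∃ L' : List ℕ, IsExpansion L' (1 / x) ∧ L'.sum = L.sum ∧
      ∀ n : ℕ, 1 ≤ n → cfVal (L' ++ [n]) = 1 / cfVal (L ++ [n]) := by
  obtain ⟨hne, htail, hval⟩ := h
  cases L with
  | nil => exact absurd rfl hne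
  | cons a M =>
      rcases Nat.eq_zero_or_pos a with rfl | ha
      · -- drop the leading zero
        cases M with
        | nil =>
            exfalso; have : x = 0 := by simpa [cfVal] using hval.symm
            rw [this] at hx; exact lt_irrefl 0 hx
        | cons b r =>
            have hMvalid : ∀ y ∈ b :: r, 1 ≤ y := fun y hy => htail y (by simpa using hy)
            have hM1 : 1 ≤ cfVal (b :: r) := one_le_cfVal (by simp) hMvalid
            have hM0 : 0 < cfVal (b :: r) := lt_of_lt_of_le one_pos hM1
            have hxv : x = 1 / cfVal (b :: r) := by
              rw [← hval, cfVal_cons 0 (by simp)]; simp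
            refine ⟨b :: r, ⟨by simp, fun y hy => hMvalid y (List.mem_cons_of_mem b (by simpa using hy)), ?_⟩, by simp, ?_⟩
            · rw [hxv, one_div_one_div]
            · intro n hn
              have happ : cfVal ((0:ℕ) :: (b :: r ++ [n])) = 1 / cfVal (b :: r ++ [n]) := by
                rw [cfVal_cons 0 (by simp)]; simp
              have : cfVal (((0:ℕ) :: b :: r) ++ [n]) = 1 / cfVal ((b :: r) ++ [n]) := happ
              rw [this, one_div_one_div]
      · -- prepend a zero
        refine ⟨0 :: a :: M, ⟨by simp, ?_, ?_⟩, by simp, ?_⟩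
        · intro y hy
          simp at hy
          rcases hy with rfl | hy
          · exact ha
          · exact htail y (by simpa using hy)
        · rw [cfVal_cons 0 (by simp), hval]; simp
        · intro n hn
          show cfVal ((0:ℕ) :: ((a :: M) ++ [n])) = 1 / cfVal ((a :: M) ++ [n])
          rw [cfVal_cons 0 (by simp)]; simp

lemma hasLen_inv {x : ℚ} {a : ℕ} (hx : 0 < x) (h : HasLen x a) : HasLen (1 / x) a := by
  obtain ⟨L, hL, hs⟩ := h
  obtain ⟨L', hL', hs', -⟩ := exp_inv hx hL
  exact ⟨L', hL', by rw [hs', hs]⟩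


lemma related_symm {α β : ℚ} (h : Related α β) : Related β α := by
  rcases h with ⟨L, n, h1, h2, h3⟩ | ⟨L, n, h1, h2, h3⟩
  · exact Or.inr ⟨L, n, h1, h2, h3⟩
  · exact Or.inl ⟨L, n, h1, h2, h3⟩

lemma related_shift {α β : ℚ} (h : Related α β) : Related (α + 1) (β + 1) := by
  rcases h with ⟨L, n, h1, h2, h3⟩ | ⟨L, n, h1, h2, h3⟩
  · obtain ⟨L', hL', -, hkey⟩ := exp_shift h2
    exact Or.inl ⟨L', n, h1, hL', by rw [hkey, h3]⟩
  · obtain ⟨L', hL', -, hkey⟩ := exp_shift h2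
    exact Or.inr ⟨L', n, h1, hL', by rw [hkey, h3]⟩

lemma related_inv {α β : ℚ} (hα : 0 < α) (hβ : 0 < β) (h : Related α β) :
    Related (1 / α) (1 / β) := by
  rcases h with ⟨L, n, h1, h2, h3⟩ | ⟨L, n, h1, h2, h3⟩
  · obtain ⟨L', hL', -, hkey⟩ := exp_inv hα h2
    exact Or.inl ⟨L', n, h1, hL', by rw [hkey n h1, h3]⟩
  · obtain ⟨L', hL', -, hkey⟩ := exp_inv hβ h2
    exact Or.inr ⟨L', n, h1, hL', by rw [hkey n h1, h3]⟩

lemma hasLen_one : HasLen 1 1 :=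
  ⟨[1], ⟨by simp, by simp, by simp [cfVal]⟩, by simp⟩

lemma hasLen_two : HasLen 2 2 :=
  ⟨[2], ⟨by simp, by simp, by simp [cfVal]⟩, by simp⟩

lemma hasLen_one_add_inv (n : ℕ) (hn : 1 ≤ n) : HasLen (1 + 1/(n:ℚ)) (1 + n) := by
  refine ⟨[1, n], ⟨by simp, ?_, ?_⟩, by simp⟩
  · intro x hx; simp at hx; omega
  · show (1:ℚ) + 1 / cfVal [n] = 1 + 1/(n:ℚ)
    simp [cfVal]

lemma eq_one_of_hasLen_one {x : ℚ} (h : HasLen x 1) : x = 1 := by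
  obtain ⟨L, ⟨hne, htail, hval⟩, hs⟩ := h
  cases L with
  | nil => exact absurd rfl hne
  | cons a M =>
      cases M with
      | nil =>
          simp [List.sum_cons] at hs
          rw [← hval, hs]; simp [cfVal]
      | cons b r =>
          have hb : 1 ≤ b := htail b (by simp)
          have hr : ∀ x ∈ r, 1 ≤ x := fun x hx => htail x (by simp [hx])
          have hrsum : r.sum = 0 ∧ a = 0 ∧ b = 1 := by
            simp [List.sum_cons] at hs; omega
          have hrnil : r = [] := by
            cases r with
            | nil => rfl
            | cons c t =>
                exfalso
                have := one_le_sum (M := c :: t) (by simp) hr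
                omega
          subst hrnil
          obtain ⟨-, ha, hb1⟩ := hrsum
          subst ha; subst hb1
          rw [← hval]
          show (0:ℚ) + 1 / cfVal [1] = 1
          simp [cfVal]

lemma hasLen_pos {x : ℚ} {a : ℕ} (hx : 0 < x) (h : HasLen x a) : 1 ≤ a := by
  obtain ⟨L, ⟨hne, htail, hval⟩, hs⟩ := h
  by_contra hc
  have ha0 : a = 0 := by omega
  subst ha0
  cases L with
  | nil => exact hne rfl
  | cons c M =>
      have hcM : c = 0 ∧ M.sum = 0 := by simp [List.sum_cons] at hs; omega
      have hMnil : M = [] := by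
        cases M with
        | nil => rfl
        | cons b r =>
            exfalso
            have := one_le_sum (M := b :: r) (by simp) (fun x hx => htail x (by simpa using hx))
            omega
      subst hMnil
      rw [hcM.1] at hval
      have : x = 0 := by simpa [cfVal] using hval.symm
      rw [this] at hx; exact lt_irrefl 0 hx

lemma two_le_of_one_lt {x : ℚ} {a : ℕ} (hx : 1 < x) (h : HasLen x a) : 2 ≤ a := by
  have h1 : 1 ≤ a := hasLen_pos (lt_trans one_pos hx) h
  rcases Nat.lt_or_ge a 2 with hc | hc
  · have : a = 1 := by omega
    rw [this] at h
    have := eq_one_of_hasLen_one h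
    rw [this] at hx; exact absurd hx (lt_irrefl 1)
  · exact hc


lemma exp_one : IsExpansion [1] 1 := ⟨by simp, by simp, by simp [cfVal]⟩

lemma one_related {m : ℕ} {β : ℚ} (hβ : 1 < β) (hb : ∃ b ≤ m, HasLen β b)
    (hcont : ¬ ∃ γ : ℚ, 0 < γ ∧ (∃ c ≤ m, HasLen γ c) ∧ 1 < γ ∧ γ < β) :
    Related 1 β := by
  obtain ⟨b, hbm, L, hexp, hsum⟩ := hb
  cases L with
  | nil => exact absurd rfl hexp.1
  | cons c M =>
      have hc1 : 1 ≤ c := head_pos_of_one_lt hexp hβ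
      rcases Nat.lt_or_ge c 2 with hc2 | hc2
      · -- c = 1
        have hc : c = 1 := by omega
        subst hc
        cases M with
        | nil =>
            exfalso
            have : β = 1 := by simpa [cfVal] using hexp.2.2.symm
            rw [this] at hβ; exact lt_irrefl 1 hβ
        | cons d M' =>
            have hd : 1 ≤ d := hexp.2.1 d (by simp)
            cases M' with
            | nil => exact Or.inl ⟨[1], d, hd, exp_one, hexp.2.2⟩
            | cons e r =>
                have hvalid : ∀ y ∈ d :: e :: r, 1 ≤ y := fun y hy =>
                  hexp.2.1 y (by simpa using hy)
                have hδ1 : 1 ≤ cfVal (e :: r) :=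
                  one_le_cfVal (by simp) (fun y hy => hvalid y (by simp [hy]))
                have hδ0 : 0 < cfVal (e :: r) := lt_of_lt_of_le one_pos hδ1
                have hβv : β = 1 + 1 / ((d:ℚ) + 1 / cfVal (e :: r)) := by
                  rw [← hexp.2.2]; rfl
                have hd0 : (0:ℚ) < (d:ℚ) + 1 / cfVal (e :: r) := by
                  have : (1:ℚ) ≤ d := by exact_mod_cast hd
                  have : 0 < 1 / cfVal (e :: r) := by positivity
                  positivity
                by_cases hδ : cfVal (e :: r) = 1
                · refine Or.inl ⟨[1], d + 1, by omega, exp_one, ?_⟩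
                  show (1:ℚ) + 1 / cfVal [d+1] = β
                  rw [hβv, hδ]
                  simp [cfVal]
                · exfalso
                  have hδgt : 1 < cfVal (e :: r) := lt_of_le_of_ne hδ1 (Ne.symm hδ)
                  apply hcont
                  refine ⟨1 + 1 / ((d:ℚ) + 1), ?_, ⟨1 + (d + 1), ?_, ?_⟩, ?_, ?_⟩
                  · positivity
                  · -- 1 + (d+1) ≤ m
                    have hrs : 1 ≤ (e :: r).sum :=
                      one_le_sum (by simp) (fun y hy => hvalid y (by simp [hy]))
                    have hrs2 : 1 ≤ e + r.sum := by simpa using hrs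
                    have hsum2 : 1 + (d + (e + r.sum)) = b := by
                      simpa [List.sum_cons] using hsum
                    omega
                  · have := hasLen_one_add_inv (d+1) (by omega)
                    have hcast : (((d:ℕ)+1 : ℕ):ℚ) = (d:ℚ) + 1 := by push_cast; ring
                    rwa [hcast] at this
                  · have : (0:ℚ) < 1 / ((d:ℚ)+1) := by positivity
                    linarith
                  · -- 1 + 1/(d+1) < β
                    rw [hβv]
                    have hlt : (d:ℚ) + 1 / cfVal (e :: r) < (d:ℚ) + 1 := by
                      have : 1 / cfVal (e :: r) < 1 := by
                        rw [div_lt_one hδ0]; exact hδgt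
                      linarith
                    have := one_div_lt_one_div_of_lt hd0 hlt
                    linarith
      · -- 2 ≤ c
        have hβ2 : 2 ≤ β := by
          rcases exp_bounds hexp with ⟨-, hq⟩ | ⟨-, hq, -⟩
          · rw [hq]; exact_mod_cast hc2
          · have : (2:ℚ) ≤ (c:ℚ) := by exact_mod_cast hc2
            linarith
        by_cases hβeq : β = 2
        · refine Or.inl ⟨[1], 1, le_refl 1, exp_one, ?_⟩
          show (1:ℚ) + 1 / cfVal [1] = β
          rw [hβeq]; norm_num [cfVal]
        · have h2β : 2 < β := lt_of_le_of_ne hβ2 (Ne.symm hβeq)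
          have hb2 : 2 ≤ b := by
            have h2 : c + M.sum = b := by simpa [List.sum_cons] using hsum
            omega
          exact absurd ⟨2, two_pos, ⟨2, le_trans hb2 hbm, hasLen_two⟩, one_lt_two, h2β⟩ hcont


lemma main_aux : ∀ m : ℕ, 1 ≤ m → ∀ α β : ℚ, 0 < α → 0 < β → α < β →
    (∃ a ≤ m, HasLen α a) → (∃ b ≤ m, HasLen β b) →
    (¬ ∃ γ : ℚ, 0 < γ ∧ (∃ c ≤ m, HasLen γ c) ∧ α < γ ∧ γ < β) → Related α β := by
  intro m
  induction m with
  | zero => omega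
  | succ k ih =>
    intro _
    have caseD : ∀ α β : ℚ, 1 < α → α < β →
        (∃ a ≤ k+1, HasLen α a) → (∃ b ≤ k+1, HasLen β b) →
        (¬ ∃ γ : ℚ, 0 < γ ∧ (∃ c ≤ k+1, HasLen γ c) ∧ α < γ ∧ γ < β) → Related α β := by
      intro α β h1α hab ha hb hcont
      obtain ⟨a, ham, hAa⟩ := ha
      obtain ⟨b, hbm, hBb⟩ := hb
      have ha2 : 2 ≤ a := two_le_of_one_lt h1α hAa
      have hk1 : 1 ≤ k := by omega
      have h1β : 1 < β := lt_trans h1α hab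
      have hA' : HasLen (α-1) (a-1) := hasLen_unshift h1α hAa
      have hB' : HasLen (β-1) (b-1) := hasLen_unshift h1β hBb
      have hcont' : ¬ ∃ γ : ℚ, 0 < γ ∧ (∃ c ≤ k, HasLen γ c) ∧ α - 1 < γ ∧ γ < β - 1 := by
        rintro ⟨γ, hγ, ⟨c, hck, hc⟩, hg1, hg2⟩
        exact hcont ⟨γ+1, by linarith, ⟨c+1, by omega, hasLen_shift hc⟩,
          by linarith, by linarith⟩
      have hrel := ih hk1 (α-1) (β-1) (by linarith) (by linarith) (by linarith)
        ⟨a-1, by omega, hA'⟩ ⟨b-1, by omega, hB'⟩ hcont'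
      have h2 := related_shift hrel
      simpa using h2
    intro α β hα hβ hab ha hb hcont
    rcases lt_trichotomy α 1 with hα1 | hα1 | hα1
    · rcases lt_trichotomy β 1 with hβ1 | hβ1 | hβ1
      · -- α < β < 1
        have h1b : 1 < 1/β := by rw [lt_div_iff₀ hβ]; linarith
        have hba : 1/β < 1/α := one_div_lt_one_div_of_lt hα hab
        have hrel : Related (1/β) (1/α) := by
          apply caseD _ _ h1b hba
          · obtain ⟨b', hbm, hB⟩ := hb; exact ⟨b', hbm, hasLen_inv hβ hB⟩
          · obtain ⟨a', ham, hA⟩ := ha; exact ⟨a', ham, hasLen_inv hα hA⟩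
          · rintro ⟨γ, hγ, ⟨c, hck, hc⟩, hg1, hg2⟩
            apply hcont
            refine ⟨1/γ, by positivity, ⟨c, hck, hasLen_inv hγ hc⟩, ?_, ?_⟩
            · have := one_div_lt_one_div_of_lt hγ hg2
              rwa [one_div_one_div] at this
            · have := one_div_lt_one_div_of_lt (by positivity : (0:ℚ) < 1/β) hg1
              rwa [one_div_one_div] at this
        have h2 := related_inv (by positivity) (by positivity) hrel
        rw [one_div_one_div, one_div_one_div] at h2
        exact related_symm h2
      · -- β = 1
        subst hβ1
        have h1a : 1 < 1/α := by rw [lt_div_iff₀ hα]; linarith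
        have hrel : Related 1 (1/α) := by
          apply one_related h1a
          · obtain ⟨a', ham, hA⟩ := ha; exact ⟨a', ham, hasLen_inv hα hA⟩
          · rintro ⟨γ, hγ, ⟨c, hck, hc⟩, hg1, hg2⟩
            apply hcont
            refine ⟨1/γ, by positivity, ⟨c, hck, hasLen_inv hγ hc⟩, ?_, ?_⟩
            · have := one_div_lt_one_div_of_lt hγ hg2
              rwa [one_div_one_div] at this
            · rw [div_lt_one hγ]; exact hg1
        have h2 := related_inv one_pos (by positivity) hrel
        rw [one_div_one, one_div_one_div] at h2
        exact related_symm h2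
      · exact absurd ⟨1, one_pos, ⟨1, by omega, hasLen_one⟩, hα1, hβ1⟩ hcont
    · subst hα1
      exact one_related hab hb hcont
    · exact caseD α β hα1 hab ha hb hcont

/-- For every integer `m ≥ 1`, if `α < β` are positive rationals with
`|α| ≤ m` and `|β| ≤ m`, and there is no positive rational `γ` with `|γ| ≤ m` and
`α < γ < β`, then `α` and `β` are related. -/
theorem contiguous_implies_related (m : ℕ) (hm : 1 ≤ m) (α β : ℚ)
    (hα : 0 < α) (hβ : 0 < β) (hab : α < β)
    (ha : ∃ a ≤ m, HasLen α a) (hb : ∃ b ≤ m, HasLen β b)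
    (hcont : ¬ ∃ γ : ℚ, 0 < γ ∧ (∃ c ≤ m, HasLen γ c) ∧ α < γ ∧ γ < β) :
    Related α β :=
  main_aux m hm α β hα hβ hab ha hb hcont

end ResolutionGraph
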